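/- Assume every bidder's valuation is monotone gross substitute. If for a price vector p ∈ ℕ^m the only weakly under-demanded set is the empty set (WUD(p) = {∅}) and S ⊆ Ω is in excess demand at p (S ∈ ED(p)), then after increasing the price of every item of S by one unit the only weakly under-demanded set is still the empty set, i.e. WUD(p + 1_S) = {∅}. -/
import Mathlib


/-- Utility of a bundle `S` at prices `p`: `v(S) - p(S)` (an integer). -/
def util {m : ℕ} (v : Finset (Fin m) → ℕ) (p : Fin m → ℕ) (S : Finset (Fin m)) : ℤ :=
  (v S : ℤ) - ∑ j ∈ S, (p j : ℤ)

/-- Demand collection: bundles of maximum utility at prices `p`. -/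
def demand {m : ℕ} (v : Finset (Fin m) → ℕ) (p : Fin m → ℕ) : Finset (Finset (Fin m)) :=
  Finset.univ.filter fun D => ∀ T : Finset (Fin m), util v p T ≤ util v p D

lemma demand_nonempty {m : ℕ} (v : Finset (Fin m) → ℕ) (p : Fin m → ℕ) :
    (demand v p).Nonempty := by
  obtain ⟨D, hD, hmax⟩ := Finset.exists_max_image (Finset.univ : Finset (Finset (Fin m)))
    (util v p) ⟨∅, Finset.mem_univ ∅⟩
  exact ⟨D, Finset.mem_filter.2 ⟨Finset.mem_univ D, fun T => hmax T (Finset.mem_univ T)⟩⟩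

/-- Maximum utility of a bidder at prices `p`. -/
def uMax {m : ℕ} (v : Finset (Fin m) → ℕ) (p : Fin m → ℕ) : ℤ :=
  Finset.univ.sup' Finset.univ_nonempty (util v p)

/-- A valuation is monotone with respect to inclusion. -/
def MonotoneVal {m : ℕ} (v : Finset (Fin m) → ℕ) : Prop :=
  ∀ ⦃S T : Finset (Fin m)⦄, S ⊆ T → v S ≤ v T

/-- Gross substitute: if `S` is demanded at `p` and `q ≥ p`, some demanded set at `q`
contains every item of `S` whose price did not change. -/
def GrossSub {m : ℕ} (v : Finset (Fin m) → ℕ) : Prop :=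
  ∀ p q : Fin m → ℕ, p ≤ q → ∀ S ∈ demand v p,
    ∃ S' ∈ demand v q, ∀ j ∈ S, p j = q j → j ∈ S'

/-- Requirement `l_p(S)` of a single bidder. -/
def req {m : ℕ} (v : Finset (Fin m) → ℕ) (p : Fin m → ℕ) (S : Finset (Fin m)) : ℕ :=
  (demand v p).inf' (demand_nonempty v p) fun D => (S ∩ D).card

/-- Redundant `h_p(S)` of a single bidder. -/
def red {m : ℕ} (v : Finset (Fin m) → ℕ) (p : Fin m → ℕ) (S : Finset (Fin m)) : ℕ :=
  (demand v p).sup' (demand_nonempty v p) fun D => (S ∩ D).card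

/-- Auction requirement `l^p(S)`. -/
def reqAll {m n : ℕ} (v : Fin n → Finset (Fin m) → ℕ) (p : Fin m → ℕ) (S : Finset (Fin m)) : ℕ :=
  ∑ i, req (v i) p S

/-- Auction redundant `h^p(S)`. -/
def redAll {m n : ℕ} (v : Fin n → Finset (Fin m) → ℕ) (p : Fin m → ℕ) (S : Finset (Fin m)) : ℕ :=
  ∑ i, red (v i) p S

/-- Lyapunov function `L(p) = Σ_i u_i(p) + Σ_j p_j`. -/
def lyap {m n : ℕ} (v : Fin n → Finset (Fin m) → ℕ) (p : Fin m → ℕ) : ℤ :=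
  ∑ i, uMax (v i) p + ∑ j, (p j : ℤ)

/-- `p` is Walrasian: there is a partition of the items into demanded sets. -/
def IsWalrasian {m n : ℕ} (v : Fin n → Finset (Fin m) → ℕ) (p : Fin m → ℕ) : Prop :=
  ∃ A : Fin n → Finset (Fin m),
    (∀ i j, i ≠ j → Disjoint (A i) (A j)) ∧
    Finset.univ.biUnion A = Finset.univ ∧
    ∀ i, A i ∈ demand (v i) p

/-- `p + 1_S`. -/
def incr {m : ℕ} (p : Fin m → ℕ) (S : Finset (Fin m)) : Fin m → ℕ :=
  fun j => if j ∈ S then p j + 1 else p j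

/-- `p - 1_S`. -/
def decr {m : ℕ} (p : Fin m → ℕ) (S : Finset (Fin m)) : Fin m → ℕ :=
  fun j => if j ∈ S then p j - 1 else p j

/-- `S` is over-demanded at `p`: `l^p(S) > |S|`. -/
def OverDemanded {m n : ℕ} (v : Fin n → Finset (Fin m) → ℕ) (p : Fin m → ℕ)
    (S : Finset (Fin m)) : Prop :=
  S.card < reqAll v p S

/-- `S` is weakly over-demanded at `p`: `l^p(S) ≥ |S|`. -/
def WeaklyOverDemanded {m n : ℕ} (v : Fin n → Finset (Fin m) → ℕ) (p : Fin m → ℕ)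
    (S : Finset (Fin m)) : Prop :=
  S.card ≤ reqAll v p S

/-- `S` is under-demanded at `p`: `h^p(S) < |S|`. -/
def UnderDemanded {m n : ℕ} (v : Fin n → Finset (Fin m) → ℕ) (p : Fin m → ℕ)
    (S : Finset (Fin m)) : Prop :=
  redAll v p S < S.card

/-- `S` is weakly under-demanded at `p`: `h^p(S) ≤ |S|`. -/
def WeaklyUnderDemanded {m n : ℕ} (v : Fin n → Finset (Fin m) → ℕ) (p : Fin m → ℕ)
    (S : Finset (Fin m)) : Prop :=
  redAll v p S ≤ S.card

/-- `S ∈ ED(p)`: `S` is over-demanded at `p` and no nonempty `T ⊆ S` is weakly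
under-demanded at `p + 1_S`. -/
def ExcessDemand {m n : ℕ} (v : Fin n → Finset (Fin m) → ℕ) (p : Fin m → ℕ)
    (S : Finset (Fin m)) : Prop :=
  OverDemanded v p S ∧
    ∀ T ⊆ S, T ≠ ∅ → ¬ WeaklyUnderDemanded v (incr p S) T

/-- `S ∈ DD(p)`: `S` is under-demanded at `p` and no nonempty `T ⊆ S` is weakly
over-demanded at `p - 1_S`. -/
def DearthDemand {m n : ℕ} (v : Fin n → Finset (Fin m) → ℕ) (p : Fin m → ℕ)
    (S : Finset (Fin m)) : Prop :=
  UnderDemanded v p S ∧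
    ∀ T ⊆ S, T ≠ ∅ → ¬ WeaklyOverDemanded v (decr p S) T

/-- `S` is a minimal minimizer for `p`. -/
def MinimalMinimizer {m n : ℕ} (v : Fin n → Finset (Fin m) → ℕ) (p : Fin m → ℕ)
    (S : Finset (Fin m)) : Prop :=
  lyap v (incr p S) < lyap v p ∧
    (∀ T : Finset (Fin m), lyap v (incr p S) ≤ lyap v (incr p T)) ∧
    ∀ T : Finset (Fin m), T ⊂ S → lyap v (incr p S) < lyap v (incr p T)

/-- `S` is a maximal minimizer for `p`. -/
def MaximalMinimizer {m n : ℕ} (v : Fin n → Finset (Fin m) → ℕ) (p : Fin m → ℕ)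
    (S : Finset (Fin m)) : Prop :=
  lyap v (decr p S) < lyap v p ∧
    (∀ T : Finset (Fin m), lyap v (decr p S) ≤ lyap v (decr p T)) ∧
    ∀ T : Finset (Fin m), T ⊂ S → lyap v (decr p S) < lyap v (decr p T)

section Aux

open Finset

variable {m : ℕ}

lemma mem_demand_iff {v : Finset (Fin m) → ℕ} {p : Fin m → ℕ} {D : Finset (Fin m)} :
    D ∈ demand v p ↔ ∀ T, util v p T ≤ util v p D := by
  simp [demand]

lemma util_le_uMax (v : Finset (Fin m) → ℕ) (p : Fin m → ℕ) (T : Finset (Fin m)) :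
    util v p T ≤ uMax v p := Finset.le_sup' _ (Finset.mem_univ T)

lemma uMax_eq_of_mem {v : Finset (Fin m) → ℕ} {p : Fin m → ℕ} {D : Finset (Fin m)}
    (hD : D ∈ demand v p) : uMax v p = util v p D :=
  le_antisymm (Finset.sup'_le _ _ fun T _ => mem_demand_iff.1 hD T) (util_le_uMax v p D)

lemma mem_demand_of_eq {v : Finset (Fin m) → ℕ} {p : Fin m → ℕ} {D : Finset (Fin m)}
    (h : util v p D = uMax v p) : D ∈ demand v p :=
  mem_demand_iff.2 fun T => (util_le_uMax v p T).trans h.ge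

lemma sum_incr_eq (p : Fin m → ℕ) (T Y : Finset (Fin m)) :
    ∑ j ∈ Y, ((incr p T j : ℕ) : ℤ) = ∑ j ∈ Y, (p j : ℤ) + ((Y ∩ T).card : ℤ) := by
  have h : ∀ j ∈ Y, ((incr p T j : ℕ) : ℤ) = (p j : ℤ) + (if j ∈ T then 1 else 0) := by
    intro j _
    by_cases hj : j ∈ T <;> simp [incr, hj]
  rw [Finset.sum_congr rfl h, Finset.sum_add_distrib]
  congr 1
  rw [Finset.sum_ite_mem]
  simp

lemma util_incr (v : Finset (Fin m) → ℕ) (p : Fin m → ℕ) (T Y : Finset (Fin m)) :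
    util v (incr p T) Y = util v p Y - ((Y ∩ T).card : ℤ) := by
  unfold util
  rw [sum_incr_eq]
  ring

end Aux
section Aux2

open Finset

variable {m : ℕ}

lemma gs_improve {v : Finset (Fin m) → ℕ} (hz : v ∅ = 0) (hmono : MonotoneVal v)
    (hgs : GrossSub v) (p : Fin m → ℕ) (X : Finset (Fin m))
    (hloc : ∀ Y, (Y \ X).card ≤ 1 → util v p Y ≤ util v p X) :
    ∀ Z, util v p Z ≤ util v p X := by
  have hμ0 : 0 ≤ util v p X := by
    have h := hloc ∅ (by simp)
    simpa [util, hz] using h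
  suffices h : ∀ k, ∀ Z : Finset (Fin m), (Z \ X).card ≤ k + 1 → util v p Z ≤ util v p X by
    intro Z; exact h (Z \ X).card Z (Nat.le_succ _)
  intro k
  induction k with
  | zero => exact fun Z hZ => hloc Z hZ
  | succ k IH =>
    intro Z₀ hZ₀c
    by_contra hlt
    push_neg at hlt
    set W := X ∪ Z₀ with hWdef
    obtain ⟨Z, hZmem, hZmax⟩ := Finset.exists_max_image W.powerset (util v p)
      ⟨X, Finset.mem_powerset.2 Finset.subset_union_left⟩
    rw [Finset.mem_powerset] at hZmem
    have hZmax' : ∀ Y, Y ⊆ W → util v p Y ≤ util v p Z := fun Y hY =>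
      hZmax Y (Finset.mem_powerset.2 hY)
    have hZbig : util v p X < util v p Z :=
      lt_of_lt_of_le hlt (hZmax' Z₀ Finset.subset_union_right)
    have hWX : W \ X = Z₀ \ X := by
      ext j; simp only [hWdef, Finset.mem_sdiff, Finset.mem_union]; tauto
    have hZXsub : Z \ X ⊆ Z₀ \ X := by
      intro j hj
      rw [← hWX]
      exact Finset.mem_sdiff.2 ⟨hZmem (Finset.mem_sdiff.1 hj).1, (Finset.mem_sdiff.1 hj).2⟩
    have hZXk : ¬ (Z \ X).card ≤ k + 1 := fun hc => absurd (IH Z hc) (not_le.2 hZbig)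
    push_neg at hZXk
    have hZXeq : Z \ X = Z₀ \ X :=
      Finset.eq_of_subset_of_card_le hZXsub (by omega)
    obtain ⟨y₁, hy₁⟩ : (Z \ X).Nonempty := Finset.card_pos.1 (by omega)
    have hy₁Z : y₁ ∈ Z := (Finset.mem_sdiff.1 hy₁).1
    have hy₁X : y₁ ∉ X := (Finset.mem_sdiff.1 hy₁).2
    set R := (Z \ X).erase y₁ with hRdef
    have hRsub : R ⊆ Z \ X := Finset.erase_subset _ _
    have hy₁R : y₁ ∉ R := Finset.notMem_erase _ _
    set N := v Finset.univ + 1 with hNdef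
    set π : Fin m → ℕ := fun j => if j ∈ W then (if j = y₁ then p j + 1 else p j) else p j + N
      with hπdef
    set π' : Fin m → ℕ := fun j => if j ∈ R then π j + N else π j with hπ'def
    -- negative utility if some item has huge price
    have hneg : ∀ (σ : Fin m → ℕ) (Y : Finset (Fin m)) (j₀ : Fin m), j₀ ∈ Y → N ≤ σ j₀ →
        util v σ Y < 0 := by
      intro σ Y j₀ hj₀ hσ
      have h1 : (σ j₀ : ℤ) ≤ ∑ j ∈ Y, (σ j : ℤ) :=
        Finset.single_le_sum (f := fun j => (σ j : ℤ)) (fun i _ => by positivity) hj₀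
      have h2 : (v Y : ℤ) ≤ (v Finset.univ : ℤ) := by
        exact_mod_cast hmono (Finset.subset_univ Y)
      have h3 : (N : ℤ) ≤ (σ j₀ : ℤ) := by exact_mod_cast hσ
      have h4 : (N : ℤ) = (v Finset.univ : ℤ) + 1 := by rw [hNdef]; push_cast; ring
      unfold util
      linarith
    have hsumW : ∀ Y : Finset (Fin m), Y ⊆ W →
        util v π Y = util v p Y - (if y₁ ∈ Y then (1:ℤ) else 0) := by
      intro Y hY
      unfold util
      have h : ∀ j ∈ Y, ((π j : ℕ) : ℤ) = (p j : ℤ) + (if j = y₁ then (1:ℤ) else 0) := by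
        intro j hj
        have hjW : j ∈ W := hY hj
        by_cases hjy : j = y₁
        · subst hjy; simp [hπdef, hjW]
        · simp [hπdef, hjW, hjy]
      rw [Finset.sum_congr rfl h, Finset.sum_add_distrib,
        Finset.sum_ite_eq' Y y₁ (fun _ => (1:ℤ))]
      ring
    have hZπ : Z ∈ demand v π := by
      rw [mem_demand_iff]
      intro Y
      have hZval : util v π Z = util v p Z - 1 := by
        rw [hsumW Z hZmem]; simp [hy₁Z]
      by_cases hYW : Y ⊆ W
      · rw [hsumW Y hYW, hZval]
        by_cases hyY : y₁ ∈ Y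
        · simp only [hyY, if_true]
          linarith [hZmax' Y hYW]
        · simp only [hyY, if_false]
          have hYk : (Y \ X).card ≤ k + 1 := by
            have hsub2 : Y \ X ⊆ (Z₀ \ X).erase y₁ := by
              intro j hj
              refine Finset.mem_erase.2 ⟨?_, ?_⟩
              · rintro rfl; exact hyY (Finset.mem_sdiff.1 hj).1
              · rw [← hWX]
                exact Finset.mem_sdiff.2 ⟨hYW (Finset.mem_sdiff.1 hj).1,
                  (Finset.mem_sdiff.1 hj).2⟩
            have hy₁Z₀ : y₁ ∈ Z₀ \ X := hZXsub hy₁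
            calc (Y \ X).card ≤ ((Z₀ \ X).erase y₁).card := Finset.card_le_card hsub2
              _ = (Z₀ \ X).card - 1 := Finset.card_erase_of_mem hy₁Z₀
              _ ≤ k + 1 := by omega
          have := IH Y hYk
          linarith
      · obtain ⟨j₀, hj₀Y, hj₀W⟩ := Finset.not_subset.1 hYW
        have hn : util v π Y < 0 := hneg π Y j₀ hj₀Y (by simp [hπdef, hj₀W])
        rw [hZval]
        linarith
    have hle : π ≤ π' := fun j => by
      by_cases hj : j ∈ R <;> simp [hπ'def, hj]
    obtain ⟨D', hD', hkeep⟩ := hgs π π' hle Z hZπ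
    have hy₁D' : y₁ ∈ D' := hkeep y₁ hy₁Z (by simp [hπ'def, hy₁R])
    have hXπ' : util v π' X = util v p X := by
      unfold util
      congr 1
      apply Finset.sum_congr rfl
      intro j hj
      have hjW : j ∈ W := Finset.subset_union_left hj
      have hjR : j ∉ R := fun hc => (Finset.mem_sdiff.1 (hRsub hc)).2 hj
      have hjy : j ≠ y₁ := fun hc => hy₁X (hc ▸ hj)
      simp [hπ'def, hπdef, hjR, hjW, hjy]
    have hXle : util v π' X ≤ util v π' D' := mem_demand_iff.1 hD' X
    have hfinal : util v π' D' < util v π' X := by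
      rw [hXπ']
      by_cases hD'W : D' ⊆ W
      · by_cases hD'R : ∀ j ∈ D', j ∉ R
        · have hval : util v π' D' = util v p D' - 1 := by
            have heq : util v π' D' = util v π D' := by
              unfold util
              congr 1
              apply Finset.sum_congr rfl
              intro j hj
              simp [hπ'def, hD'R j hj]
            rw [heq, hsumW D' hD'W]
            simp [hy₁D']
          have hD'loc : (D' \ X).card ≤ 1 := by
            have hsub : D' \ X ⊆ {y₁} := by
              intro j hj
              obtain ⟨hjD', hjX⟩ := Finset.mem_sdiff.1 hj
              have hjZX : j ∈ Z \ X := by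
                rw [hZXeq, ← hWX]
                exact Finset.mem_sdiff.2 ⟨hD'W hjD', hjX⟩
              have := hD'R j hjD'
              rw [hRdef] at this
              simp only [Finset.mem_erase, not_and] at this
              rcases eq_or_ne j y₁ with h | h
              · simp [h]
              · exact absurd hjZX (this h)
            calc (D' \ X).card ≤ ({y₁} : Finset (Fin m)).card := Finset.card_le_card hsub
              _ = 1 := Finset.card_singleton _
          have := hloc D' hD'loc
          linarith
        · push_neg at hD'R
          obtain ⟨j₀, hj₀D', hj₀R⟩ := hD'R
          have hn : util v π' D' < 0 := hneg π' D' j₀ hj₀D' (by simp [hπ'def, hj₀R])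
          linarith
      · obtain ⟨j₀, hj₀D', hj₀W⟩ := Finset.not_subset.1 hD'W
        have hj₀R : j₀ ∉ R := fun hc => hj₀W (hZmem (Finset.mem_sdiff.1 (hRsub hc)).1)
        have hn : util v π' D' < 0 := hneg π' D' j₀ hj₀D'
          (by simp [hπ'def, hπdef, hj₀R, hj₀W])
        linarith
    exact absurd hXle (not_le.2 hfinal)

end Aux2
section Aux3

open Finset

variable {m : ℕ}

lemma exists_improve {v : Finset (Fin m) → ℕ} (hz : v ∅ = 0) (hmono : MonotoneVal v)
    (hgs : GrossSub v) {p : Fin m → ℕ} {X : Finset (Fin m)} (hX : X ∉ demand v p) :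
    ∃ Y, (Y \ X).card ≤ 1 ∧ util v p X < util v p Y := by
  by_contra h
  push_neg at h
  exact hX (mem_demand_iff.2 (gs_improve hz hmono hgs p X h))

lemma demand_case {v : Finset (Fin m) → ℕ} {r : Fin m → ℕ} (T : Finset (Fin m))
    {X : Finset (Fin m)} (hX : X ∈ demand v r) :
    util v r X - ((X ∩ T).card : ℤ) ≤ uMax v r - (req v r T : ℤ) := by
  have h1 : uMax v r = util v r X := uMax_eq_of_mem hX
  have h2 : req v r T ≤ (T ∩ X).card := Finset.inf'_le _ hX
  rw [Finset.inter_comm T X] at h2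
  have h2' : (req v r T : ℤ) ≤ ((X ∩ T).card : ℤ) := by exact_mod_cast h2
  linarith

lemma util_sub_le {v : Finset (Fin m) → ℕ} (hz : v ∅ = 0) (hmono : MonotoneVal v)
    (hgs : GrossSub v) (r : Fin m → ℕ) (T : Finset (Fin m)) (X : Finset (Fin m)) :
    util v r X - ((X ∩ T).card : ℤ) ≤ uMax v r - (req v r T : ℤ) := by
  suffices h : ∀ d : ℕ, ∀ X : Finset (Fin m), uMax v r - util v r X ≤ (d : ℤ) →
      util v r X - ((X ∩ T).card : ℤ) ≤ uMax v r - (req v r T : ℤ) by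
    exact h (uMax v r - util v r X).toNat X (Int.self_le_toNat _)
  intro d
  induction d with
  | zero =>
    intro X hX
    have : util v r X = uMax v r := le_antisymm (util_le_uMax v r X)
      (by push_cast at hX; linarith)
    exact demand_case T (mem_demand_of_eq this)
  | succ d IH =>
    intro X hX
    by_cases hXd : X ∈ demand v r
    · exact demand_case T hXd
    · obtain ⟨Y, hY1, hY2⟩ := exists_improve hz hmono hgs hXd
      have hYd : uMax v r - util v r Y ≤ (d : ℤ) := by
        have : util v r X + 1 ≤ util v r Y := Int.add_one_le_iff.2 hY2
        push_cast at hX ⊢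
        linarith
      have hIH := IH Y hYd
      have hcard : (Y ∩ T).card ≤ (X ∩ T).card + 1 := by
        have hsub : Y ∩ T ⊆ (X ∩ T) ∪ (Y \ X) := by
          intro j hj
          obtain ⟨hjY, hjT⟩ := Finset.mem_inter.1 hj
          by_cases hjX : j ∈ X
          · exact Finset.mem_union_left _ (Finset.mem_inter.2 ⟨hjX, hjT⟩)
          · exact Finset.mem_union_right _ (Finset.mem_sdiff.2 ⟨hjY, hjX⟩)
        calc (Y ∩ T).card ≤ ((X ∩ T) ∪ (Y \ X)).card := Finset.card_le_card hsub
          _ ≤ (X ∩ T).card + (Y \ X).card := Finset.card_union_le _ _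
          _ ≤ (X ∩ T).card + 1 := by omega
      have hcard' : ((Y ∩ T).card : ℤ) ≤ ((X ∩ T).card : ℤ) + 1 := by exact_mod_cast hcard
      linarith

lemma demand_incr_exists {v : Finset (Fin m) → ℕ} (hz : v ∅ = 0) (hmono : MonotoneVal v)
    (hgs : GrossSub v) (r : Fin m → ℕ) (T : Finset (Fin m)) :
    ∃ D, D ∈ demand v r ∧ D ∈ demand v (incr r T) ∧ (T ∩ D).card = req v r T := by
  obtain ⟨D, hD, hDval⟩ := Finset.exists_mem_eq_inf' (demand_nonempty v r)
    (fun D => (T ∩ D).card)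
  refine ⟨D, hD, ?_, hDval.symm⟩
  rw [mem_demand_iff]
  intro Y
  rw [util_incr, util_incr]
  have h1 := util_sub_le hz hmono hgs r T Y
  have h2 : util v r D = uMax v r := (uMax_eq_of_mem hD).symm
  have h3 : ((D ∩ T).card : ℤ) = (req v r T : ℤ) := by
    rw [Finset.inter_comm D T]; exact_mod_cast hDval.symm
  linarith

lemma uMax_incr {v : Finset (Fin m) → ℕ} (hz : v ∅ = 0) (hmono : MonotoneVal v)
    (hgs : GrossSub v) (r : Fin m → ℕ) (T : Finset (Fin m)) :
    uMax v (incr r T) = uMax v r - (req v r T : ℤ) := by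
  obtain ⟨D, hD, hDq, hDval⟩ := demand_incr_exists hz hmono hgs r T
  rw [uMax_eq_of_mem hDq, util_incr]
  rw [uMax_eq_of_mem hD]
  congr 1
  have h : (D ∩ T).card = req v r T := by rw [Finset.inter_comm]; exact hDval
  exact_mod_cast h

lemma red_incr_eq_req {v : Finset (Fin m) → ℕ} (hz : v ∅ = 0) (hmono : MonotoneVal v)
    (hgs : GrossSub v) (r : Fin m → ℕ) (T : Finset (Fin m)) :
    red v (incr r T) T = req v r T := by
  obtain ⟨D, hD, hDq, hDval⟩ := demand_incr_exists hz hmono hgs r T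
  apply le_antisymm
  · apply Finset.sup'_le
    intro D' hD'
    have h1 : util v (incr r T) D' = uMax v (incr r T) := (uMax_eq_of_mem hD').symm
    rw [util_incr, uMax_incr hz hmono hgs] at h1
    have h2 : util v r D' - ((D' ∩ T).card : ℤ) ≤ uMax v r - ((D' ∩ T).card : ℤ) := by
      have := util_le_uMax v r D'
      linarith
    have h3 : ((T ∩ D').card : ℤ) ≤ (req v r T : ℤ) := by
      rw [Finset.inter_comm T D']
      linarith [h1, h2]
    exact_mod_cast h3
  · rw [← hDval]
    exact Finset.le_sup' (f := fun D => (T ∩ D).card) hDq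

end Aux3
section Aux4

open Finset

variable {m n : ℕ}

lemma lyap_incr {v : Fin n → Finset (Fin m) → ℕ} (hz : ∀ i, v i ∅ = 0)
    (hmono : ∀ i, MonotoneVal (v i)) (hgs : ∀ i, GrossSub (v i))
    (r : Fin m → ℕ) (T : Finset (Fin m)) :
    lyap v (incr r T) = lyap v r + (T.card : ℤ) - (reqAll v r T : ℤ) := by
  unfold lyap
  have h1 : ∑ i, uMax (v i) (incr r T) = ∑ i, (uMax (v i) r - (req (v i) r T : ℤ)) :=
    Finset.sum_congr rfl fun i _ => uMax_incr (hz i) (hmono i) (hgs i) r T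
  have h2 : ∑ j, ((incr r T j : ℕ) : ℤ) = ∑ j, (r j : ℤ) + (T.card : ℤ) := by
    have := sum_incr_eq r T Finset.univ
    rwa [Finset.univ_inter] at this
  rw [h1, h2, Finset.sum_sub_distrib]
  have h3 : ((reqAll v r T : ℕ) : ℤ) = ∑ i, (req (v i) r T : ℤ) := by
    unfold reqAll; push_cast; ring
  rw [h3]
  ring

lemma redAll_incr {v : Fin n → Finset (Fin m) → ℕ} (hz : ∀ i, v i ∅ = 0)
    (hmono : ∀ i, MonotoneVal (v i)) (hgs : ∀ i, GrossSub (v i))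
    (r : Fin m → ℕ) (T : Finset (Fin m)) :
    redAll v (incr r T) T = reqAll v r T :=
  Finset.sum_congr rfl fun i _ => red_incr_eq_req (hz i) (hmono i) (hgs i) r T

lemma req_superadd {v : Finset (Fin m) → ℕ} (r : Fin m → ℕ) {A B : Finset (Fin m)}
    (hAB : Disjoint A B) : req v r A + req v r B ≤ req v r (A ∪ B) := by
  obtain ⟨D, hD, hDval⟩ := Finset.exists_mem_eq_inf' (demand_nonempty v r)
    (fun D => ((A ∪ B) ∩ D).card)
  have h1 : req v r A ≤ (A ∩ D).card := Finset.inf'_le _ hD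
  have h2 : req v r B ≤ (B ∩ D).card := Finset.inf'_le _ hD
  have h3 : ((A ∪ B) ∩ D).card = (A ∩ D).card + (B ∩ D).card := by
    rw [Finset.union_inter_distrib_right]
    exact Finset.card_union_of_disjoint
      (hAB.mono Finset.inter_subset_left Finset.inter_subset_left)
  rw [show req v r (A ∪ B) = ((A ∪ B) ∩ D).card from hDval]
  omega

lemma reqAll_superadd {v : Fin n → Finset (Fin m) → ℕ} (r : Fin m → ℕ)
    {A B : Finset (Fin m)} (hAB : Disjoint A B) :
    reqAll v r A + reqAll v r B ≤ reqAll v r (A ∪ B) := by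
  unfold reqAll
  rw [← Finset.sum_add_distrib]
  exact Finset.sum_le_sum fun i _ => req_superadd r hAB

lemma red_empty (v : Finset (Fin m) → ℕ) (r : Fin m → ℕ) : red v r ∅ = 0 := by
  unfold red
  simp

lemma redAll_empty (v : Fin n → Finset (Fin m) → ℕ) (r : Fin m → ℕ) : redAll v r ∅ = 0 := by
  unfold redAll
  simp [red_empty]

lemma red_le_one (v : Finset (Fin m) → ℕ) (r : Fin m → ℕ) (j : Fin m) :
    red v r {j} ≤ 1 := by
  apply Finset.sup'_le
  intro D _
  calc ({j} ∩ D).card ≤ ({j} : Finset (Fin m)).card :=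
        Finset.card_le_card Finset.inter_subset_left
    _ = 1 := Finset.card_singleton _

lemma demand_union_zero {v : Finset (Fin m) → ℕ} (hmono : MonotoneVal v) {q : Fin m → ℕ}
    {D Z : Finset (Fin m)} (hD : D ∈ demand v q) (hZ : ∀ j ∈ Z, q j = 0) :
    D ∪ Z ∈ demand v q := by
  rw [mem_demand_iff]
  intro Y
  have h1 : util v q Y ≤ util v q D := mem_demand_iff.1 hD Y
  have h2 : util v q D ≤ util v q (D ∪ Z) := by
    unfold util
    have hv : (v D : ℤ) ≤ (v (D ∪ Z) : ℤ) := by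
      exact_mod_cast hmono Finset.subset_union_left
    have hsum : ∑ j ∈ D ∪ Z, (q j : ℤ) = ∑ j ∈ D, (q j : ℤ) := by
      rw [show D ∪ Z = D ∪ (Z \ D) from (Finset.union_sdiff_self_eq_union).symm,
        Finset.sum_union (Finset.disjoint_sdiff)]
      have : ∑ j ∈ Z \ D, (q j : ℤ) = 0 := by
        apply Finset.sum_eq_zero
        intro j hj
        have := hZ j (Finset.mem_sdiff.1 hj).1
        simp [this]
      omega
    rw [hsum]
    omega
  linarith

lemma red_zero_aug {v : Finset (Fin m) → ℕ} (hmono : MonotoneVal v) {q : Fin m → ℕ}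
    {X X0 : Finset (Fin m)} (hX0 : X0 ⊆ X) (hq : ∀ j ∈ X0, q j = 0) :
    red v q (X \ X0) + X0.card ≤ red v q X := by
  obtain ⟨D, hD, hDval⟩ := Finset.exists_mem_eq_sup' (demand_nonempty v q)
    (fun D => ((X \ X0) ∩ D).card)
  have hU : D ∪ X0 ∈ demand v q := demand_union_zero hmono hD hq
  have hsub : ((X \ X0) ∩ D) ∪ X0 ⊆ X ∩ (D ∪ X0) := by
    intro j hj
    rcases Finset.mem_union.1 hj with h | h
    · obtain ⟨hj1, hj2⟩ := Finset.mem_inter.1 h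
      exact Finset.mem_inter.2 ⟨(Finset.mem_sdiff.1 hj1).1, Finset.mem_union_left _ hj2⟩
    · exact Finset.mem_inter.2 ⟨hX0 h, Finset.mem_union_right _ h⟩
  have hdisj : Disjoint ((X \ X0) ∩ D) X0 := by
    apply Finset.disjoint_left.2
    intro j hj
    exact fun hc => (Finset.mem_sdiff.1 (Finset.mem_inter.1 hj).1).2 hc
  calc red v q (X \ X0) + X0.card = ((X \ X0) ∩ D).card + X0.card := by
        rw [show red v q (X \ X0) = ((X \ X0) ∩ D).card from hDval]
    _ = (((X \ X0) ∩ D) ∪ X0).card := (Finset.card_union_of_disjoint hdisj).symm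
    _ ≤ (X ∩ (D ∪ X0)).card := Finset.card_le_card hsub
    _ ≤ red v q X := Finset.le_sup' (f := fun D => (X ∩ D).card) hU

end Aux4
section Aux5

open Finset

variable {m n : ℕ}

lemma crux_pos {v : Fin n → Finset (Fin m) → ℕ} (hz : ∀ i, v i ∅ = 0)
    (hmono : ∀ i, MonotoneVal (v i)) (hgs : ∀ i, GrossSub (v i))
    (p : Fin m → ℕ) (S : Finset (Fin m))
    (H1 : ∀ X : Finset (Fin m), X ≠ ∅ → X.card + 1 ≤ redAll v p X)
    (H2 : ∀ X : Finset (Fin m), X ⊆ S → X ≠ ∅ → X.card + 1 ≤ redAll v (incr p S) X)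
    (X : Finset (Fin m)) (hXq : ∀ j ∈ X, 1 ≤ incr p S j) (hXne : X ≠ ∅) :
    X.card + 1 ≤ redAll v (incr p S) X := by
  set q := incr p S with hq
  set X1 := X ∩ S with hX1
  set X2 := X \ S with hX2
  set A := S \ X with hA
  set b := decr p X2 with hb
  set a := decr q X with ha
  set pA := incr p A with hpA
  have hp2 : ∀ j ∈ X2, 1 ≤ p j := by
    intro j hj
    obtain ⟨hjX, hjS⟩ := Finset.mem_sdiff.1 hj
    have := hXq j hjX
    simpa [hq, incr, hjS] using this
  -- price identities
  have e1 : incr b X2 = p := by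
    funext j
    by_cases h : j ∈ X2
    · have h1 : 1 ≤ p j := hp2 j h
      simp only [incr, decr, hb, h, if_true]
      omega
    · simp [incr, decr, hb, h]
  have e2 : incr b A = a := by
    funext j
    by_cases hS : j ∈ S <;> by_cases hX : j ∈ X
    · have h1 : j ∉ A := by simp [hA, hX]
      have h2 : j ∉ X2 := by simp [hX2, hS]
      simp [incr, decr, ha, hb, hq, h1, h2, hX, hS]
    · have h1 : j ∈ A := by simp [hA, hS, hX]
      have h2 : j ∉ X2 := by simp [hX2, hX]
      simp [incr, decr, ha, hb, hq, h1, h2, hX, hS]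
    · have h1 : j ∉ A := by simp [hA, hS]
      have h2 : j ∈ X2 := by simp [hX2, hX, hS]
      simp [incr, decr, ha, hb, hq, h1, h2, hX, hS]
    · have h1 : j ∉ A := by simp [hA, hS]
      have h2 : j ∉ X2 := by simp [hX2, hX]
      simp [incr, decr, ha, hb, hq, h1, h2, hX, hS]
  have e3 : incr b (A ∪ X2) = pA := by
    funext j
    by_cases hjA : j ∈ A <;> by_cases hjX2 : j ∈ X2
    · exact absurd (Finset.mem_sdiff.1 hjA).1 (Finset.mem_sdiff.1 hjX2).2
    · have h2 : j ∉ X2 := hjX2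
      simp [incr, decr, hpA, hb, hjA, h2]
    · have h1 : 1 ≤ p j := hp2 j hjX2
      simp only [incr, decr, hpA, hb, Finset.mem_union, hjA, hjX2, if_true, or_true,
        if_false, false_or]
      omega
    · simp [incr, decr, hpA, hb, hjA, hjX2]
  have e4 : incr a X = q := by
    funext j
    by_cases hX : j ∈ X
    · have h1 : 1 ≤ q j := hXq j hX
      simp only [incr, decr, ha, hX, if_true]
      omega
    · simp [incr, decr, ha, hX]
  have e5 : incr pA X1 = q := by
    funext j
    by_cases hS : j ∈ S <;> by_cases hX : j ∈ X
    · have h1 : j ∈ X1 := by simp [hX1, hX, hS]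
      have h2 : j ∉ A := by simp [hA, hX]
      simp [incr, hpA, hq, h1, h2, hS]
    · have h1 : j ∉ X1 := by simp [hX1, hX]
      have h2 : j ∈ A := by simp [hA, hS, hX]
      simp [incr, hpA, hq, h1, h2, hS]
    · have h1 : j ∉ X1 := by simp [hX1, hS]
      have h2 : j ∉ A := by simp [hA, hS]
      simp [incr, hpA, hq, h1, h2, hS]
    · have h1 : j ∉ X1 := by simp [hX1, hX]
      have h2 : j ∉ A := by simp [hA, hS]
      simp [incr, hpA, hq, h1, h2, hS]
  have hdisjAX2 : Disjoint A X2 := by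
    apply Finset.disjoint_left.2
    intro j hj
    exact fun hc => (Finset.mem_sdiff.1 hc).2 (Finset.mem_sdiff.1 hj).1
  have hcardU : (A ∪ X2).card = A.card + X2.card := Finset.card_union_of_disjoint hdisjAX2
  -- Lyapunov facts
  have F1 : lyap v p = lyap v b + (X2.card : ℤ) - (reqAll v b X2 : ℤ) := by
    rw [← e1]; exact lyap_incr hz hmono hgs b X2
  have G1 : redAll v p X2 = reqAll v b X2 := by
    rw [← e1]; exact redAll_incr hz hmono hgs b X2
  have F2 : lyap v a = lyap v b + (A.card : ℤ) - (reqAll v b A : ℤ) := by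
    rw [← e2]; exact lyap_incr hz hmono hgs b A
  have F3 : lyap v pA = lyap v b + ((A ∪ X2).card : ℤ) - (reqAll v b (A ∪ X2) : ℤ) := by
    rw [← e3]; exact lyap_incr hz hmono hgs b (A ∪ X2)
  have F4 : lyap v q = lyap v a + (X.card : ℤ) - (reqAll v a X : ℤ) := by
    rw [← e4]; exact lyap_incr hz hmono hgs a X
  have G4 : redAll v q X = reqAll v a X := by
    rw [← e4]; exact redAll_incr hz hmono hgs a X
  have F5 : lyap v q = lyap v pA + (X1.card : ℤ) - (reqAll v pA X1 : ℤ) := by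
    rw [← e5]; exact lyap_incr hz hmono hgs pA X1
  have G5 : redAll v q X1 = reqAll v pA X1 := by
    rw [← e5]; exact redAll_incr hz hmono hgs pA X1
  have SA : (reqAll v b A : ℤ) + (reqAll v b X2 : ℤ) ≤ (reqAll v b (A ∪ X2) : ℤ) := by
    exact_mod_cast reqAll_superadd b hdisjAX2
  have hcardU' : ((A ∪ X2).card : ℤ) = (A.card : ℤ) + (X2.card : ℤ) := by
    exact_mod_cast hcardU
  -- the exchange inequality
  have hexch : lyap v pA + lyap v b ≤ lyap v a + lyap v p := by
    rw [F3, F2, F1, hcardU']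
    linarith
  -- case facts
  have hX1orX2 : X1 ≠ ∅ ∨ X2 ≠ ∅ := by
    by_contra hcon
    push_neg at hcon
    apply hXne
    have : X1 ∪ X2 = X := by
      ext j; simp only [hX1, hX2, Finset.mem_union, Finset.mem_inter, Finset.mem_sdiff]
      tauto
    rw [← this, hcon.1, hcon.2]
    simp
  have hb_ge : lyap v p ≤ lyap v b ∧ (X2 ≠ ∅ → lyap v p + 1 ≤ lyap v b) := by
    constructor
    · by_cases hc : X2 = ∅
      · have : b = p := by
          funext j; simp [hb, decr, hc]
        rw [this]
      · have h := H1 X2 hc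
        have h' : (X2.card : ℤ) + 1 ≤ (redAll v p X2 : ℤ) := by exact_mod_cast h
        rw [G1] at h'
        linarith [F1]
    · intro hc
      have h := H1 X2 hc
      have h' : (X2.card : ℤ) + 1 ≤ (redAll v p X2 : ℤ) := by exact_mod_cast h
      rw [G1] at h'
      linarith [F1]
  have hpA_ge : lyap v q ≤ lyap v pA ∧ (X1 ≠ ∅ → lyap v q + 1 ≤ lyap v pA) := by
    constructor
    · by_cases hc : X1 = ∅
      · have hAS : A = S := by
          ext j
          simp only [hA, Finset.mem_sdiff]
          constructor
          · exact fun h => h.1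
          · intro hjS
            refine ⟨hjS, fun hjX => ?_⟩
            have : j ∈ X1 := by simp [hX1, hjX, hjS]
            rw [hc] at this
            exact absurd this (Finset.notMem_empty j)
        have : pA = q := by rw [hpA, hAS]
        rw [this]
      · have h := H2 X1 (by rw [hX1]; exact Finset.inter_subset_right) hc
        have h' : (X1.card : ℤ) + 1 ≤ (redAll v q X1 : ℤ) := by exact_mod_cast h
        rw [G5] at h'
        linarith [F5]
    · intro hc
      have h := H2 X1 (by rw [hX1]; exact Finset.inter_subset_right) hc
      have h' : (X1.card : ℤ) + 1 ≤ (redAll v q X1 : ℤ) := by exact_mod_cast h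
      rw [G5] at h'
      linarith [F5]
  have key : lyap v q + 1 ≤ lyap v a := by
    rcases hX1orX2 with h | h
    · have h1 := hpA_ge.2 h
      have h2 := hb_ge.1
      linarith
    · have h1 := hb_ge.2 h
      have h2 := hpA_ge.1
      linarith
  have final : (X.card : ℤ) + 1 ≤ (redAll v q X : ℤ) := by
    rw [G4]
    linarith [F4]
  exact_mod_cast final

end Aux5

theorem stmt10 {m n : ℕ} (v : Fin n → Finset (Fin m) → ℕ)
    (hzero : ∀ i, v i ∅ = 0) (hmono : ∀ i, MonotoneVal (v i))
    (hgs : ∀ i, GrossSub (v i))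
    (p : Fin m → ℕ) (S : Finset (Fin m))
    (hwud : {T : Finset (Fin m) | WeaklyUnderDemanded v p T} = {∅})
    (hed : ExcessDemand v p S) :
    {T : Finset (Fin m) | WeaklyUnderDemanded v (incr p S) T} = {∅} := by
  have H1 : ∀ X : Finset (Fin m), X ≠ ∅ → X.card + 1 ≤ redAll v p X := by
    intro X hX
    have h := Set.ext_iff.1 hwud X
    simp only [Set.mem_setOf_eq, Set.mem_singleton_iff] at h
    have hn : ¬ WeaklyUnderDemanded v p X := fun hc => hX (h.1 hc)
    unfold WeaklyUnderDemanded at hn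
    omega
  have H2 : ∀ X : Finset (Fin m), X ⊆ S → X ≠ ∅ → X.card + 1 ≤ redAll v (incr p S) X := by
    intro X h1 h2
    have h := hed.2 X h1 h2
    unfold WeaklyUnderDemanded at h
    omega
  have crux : ∀ X : Finset (Fin m), X ≠ ∅ → X.card + 1 ≤ redAll v (incr p S) X := by
    intro X hXne
    obtain ⟨j₀, hj₀⟩ := Finset.nonempty_iff_ne_empty.2 hXne
    -- n ≥ 2
    have hn2 : 2 ≤ n := by
      have h1 := H1 {j₀} (Finset.singleton_ne_empty j₀)
      have h2 : redAll v p {j₀} ≤ n := by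
        unfold redAll
        calc ∑ i, red (v i) p {j₀} ≤ ∑ _i : Fin n, 1 :=
              Finset.sum_le_sum fun i _ => red_le_one (v i) p j₀
          _ = n := by simp
      simp at h1
      omega
    set q := incr p S with hq
    set X0 := X.filter (fun j => q j = 0) with hX0
    set X' := X \ X0 with hX'
    have hX0sub : X0 ⊆ X := Finset.filter_subset _ _
    have hq0 : ∀ j ∈ X0, q j = 0 := fun j hj => (Finset.mem_filter.1 hj).2
    have haug : redAll v q X' + n * X0.card ≤ redAll v q X := by
      unfold redAll
      calc (∑ i, red (v i) q X') + n * X0.card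
          = ∑ i, (red (v i) q X' + X0.card) := by
            rw [Finset.sum_add_distrib]
            simp [Finset.card_univ, mul_comm]
        _ ≤ ∑ i, red (v i) q X :=
            Finset.sum_le_sum fun i _ => red_zero_aug (hmono i) hX0sub hq0
    have hcard : X'.card + X0.card = X.card := by
      rw [hX']
      exact Finset.card_sdiff_add_card_eq_card hX0sub
    by_cases hX'e : X' = ∅
    · have hX0X : X0.card = X.card := by
        rw [hX'e] at hcard
        simpa using hcard
      have hXpos : 1 ≤ X.card := Finset.card_pos.2 ⟨j₀, hj₀⟩
      rw [hX'e, redAll_empty] at haug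
      have hmul : 2 * X0.card ≤ n * X0.card := Nat.mul_le_mul_right _ hn2
      omega
    · have hpos : ∀ j ∈ X', 1 ≤ q j := by
        intro j hj
        obtain ⟨hjX, hjX0⟩ := Finset.mem_sdiff.1 hj
        have : ¬ (q j = 0) := fun hc => hjX0 (Finset.mem_filter.2 ⟨hjX, hc⟩)
        omega
      have h1 := crux_pos hzero hmono hgs p S H1 H2 X' hpos hX'e
      rw [← hq] at h1
      have hmul : X0.card ≤ n * X0.card := Nat.le_mul_of_pos_left _ (by omega)
      omega
  ext T
  simp only [Set.mem_setOf_eq, Set.mem_singleton_iff]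
  constructor
  · intro hT
    by_contra hne
    have := crux T hne
    unfold WeaklyUnderDemanded at hT
    omega
  · rintro rfl
    unfold WeaklyUnderDemanded
    simp [redAll_empty]
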